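/- arXiv:0705.4286 — 6 statements merged into one kernel-verified Lean document; each statement's English description precedes it below -/
import Mathlib

section
/- Let X be a Priestley space. Then the following are equivalent: (1) the lattice E(X) of clopen down-sets of X contains no proper Boolean interval (i.e. E(X) is affine complete): for all clopen down-sets U ⊊ V there exists a clopen down-set C with U ⊆ C ⊆ V having no complement in the interval [U,V] of E(X); (2) for all clopen down-sets U ⊊ V of X, the set V \ U contains two distinct comparable elements, i.e. there exist x, y ∈ V \ U with x < y. -/
/-- A clopen down-set of an ordered topological space. -/
def IsClopenLower {X : Type*} [TopologicalSpace X] [Preorder X] (U : Set X) : Prop :=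
  IsClopen U ∧ IsLowerSet U

/-- For a Priestley space `X`, the lattice `E(X)` of clopen down-sets contains
no proper Boolean interval (i.e. `E(X)` is affine complete) if and only if for
all clopen down-sets `U ⊊ V` the set `V \ U` contains two distinct comparable
elements. -/
theorem priestley_affine_complete_iff
    (X : Type*) [TopologicalSpace X] [PartialOrder X]
    [CompactSpace X] [PriestleySpace X] :
    (∀ U V : Set X, IsClopenLower U → IsClopenLower V → U ⊆ V → U ≠ V →
        ∃ C : Set X, IsClopenLower C ∧ U ⊆ C ∧ C ⊆ V ∧
          ¬ ∃ C' : Set X, IsClopenLower C' ∧ U ⊆ C' ∧ C' ⊆ V ∧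
            C ∩ C' = U ∧ C ∪ C' = V) ↔
    (∀ U V : Set X, IsClopenLower U → IsClopenLower V → U ⊆ V → U ≠ V →
        ∃ x y, x ∈ V \ U ∧ y ∈ V \ U ∧ x < y) := by
  constructor
  · intro h U V hU hV hUV hne
    by_contra hcon
    push_neg at hcon
    obtain ⟨C, hC, hUC, hCV, hno⟩ := h U V hU hV hUV hne
    apply hno
    have hclopen : IsClopen (U ∪ (V \ C)) := hU.1.union (hV.1.diff hC.1)
    have hlower : IsLowerSet (U ∪ (V \ C)) := by
      intro b a hab hb
      rcases hb with hb | hb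
      · exact Or.inl (hU.2 hab hb)
      · have haV : a ∈ V := hV.2 hab hb.1
        by_cases haU : a ∈ U
        · exact Or.inl haU
        · refine Or.inr ⟨haV, ?_⟩
          rcases eq_or_lt_of_le hab with rfl | hlt
          · exact hb.2
          · exact absurd hlt (hcon a b ⟨haV, haU⟩ ⟨hb.1, fun hbU => hb.2 (hUC hbU)⟩)
    have hsub : U ∪ (V \ C) ⊆ V := by
      rintro a (ha | ha)
      · exact hUV ha
      · exact ha.1
    have hint : C ∩ (U ∪ (V \ C)) = U := by
      apply Set.Subset.antisymm
      · rintro a ⟨haC, haU | haD⟩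
        · exact haU
        · exact absurd haC haD.2
      · intro a haU; exact ⟨hUC haU, Or.inl haU⟩
    have huni : C ∪ (U ∪ (V \ C)) = V := by
      apply Set.Subset.antisymm
      · rintro a (haC | haU | haD)
        · exact hCV haC
        · exact hUV haU
        · exact haD.1
      · intro a haV
        by_cases haC : a ∈ C
        · exact Or.inl haC
        · exact Or.inr (Or.inr ⟨haV, haC⟩)
    exact ⟨U ∪ (V \ C), ⟨hclopen, hlower⟩, Set.subset_union_left, hsub, hint, huni⟩
  · intro h U V hU hV hUV hne
    obtain ⟨x, y, hx, hy, hxy⟩ := h U V hU hV hUV hne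
    obtain ⟨W, hWc, hWl, hyW, hxW⟩ := exists_isClopen_lower_of_not_le hxy.not_ge
    have hclopen : IsClopen (U ∪ (V ∩ W)) := hU.1.union (hV.1.inter hWc)
    have hlower : IsLowerSet (U ∪ (V ∩ W)) := hU.2.union (hV.2.inter hWl)
    have hsub : U ∪ (V ∩ W) ⊆ V := by
      rintro a (ha | ha)
      · exact hUV ha
      · exact ha.1
    refine ⟨U ∪ (V ∩ W), ⟨hclopen, hlower⟩, Set.subset_union_left, hsub, ?_⟩
    rintro ⟨C', hC', hUC', hC'V, hint, huni⟩
    have hyC : y ∉ U ∪ (V ∩ W) := by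
      rintro (h1 | h2)
      · exact hy.2 h1
      · exact hyW h2.2
    have hyC' : y ∈ C' := by
      have hmem : y ∈ (U ∪ (V ∩ W)) ∪ C' := by rw [huni]; exact hy.1
      rcases hmem with h1 | h1
      · exact absurd h1 hyC
      · exact h1
    have hxC' : x ∈ C' := hC'.2 hxy.le hyC'
    have hxC : x ∈ U ∪ (V ∩ W) := Or.inr ⟨hx.1, hxW⟩
    have hxU : x ∈ U := hint ▸ (⟨hxC, hxC'⟩ : x ∈ (U ∪ (V ∩ W)) ∩ C')
    exact hx.2 hxU
end

section
/- A Priestley space X is affine complete if and only if each nonempty open subset of X contains two distinct comparable points. Precisely: the lattice E(X) of clopen down-sets of X contains no proper Boolean interval if and only if every nonempty open set W ⊆ X contains points x, y with x < y. -/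
open Set

/-- Basis lemma: in a Priestley space, every point of an open set `W` has a
neighbourhood of the form `D ∩ S ⊆ W` with `D` clopen lower and `S` clopen upper. -/
lemma exists_clopen_sandwich {X : Type*} [TopologicalSpace X] [PartialOrder X]
    [CompactSpace X] [PriestleySpace X] {W : Set X} (hW : IsOpen W) {x : X} (hx : x ∈ W) :
    ∃ D S : Set X, IsClopen D ∧ IsLowerSet D ∧ IsClopen S ∧ IsUpperSet S ∧
      x ∈ D ∧ x ∈ S ∧ D ∩ S ⊆ W := by
  classical
  have key : ∀ y : X, ∃ A : Set X,
      IsClopen A ∧ (IsLowerSet A ∨ IsUpperSet A) ∧ x ∈ A ∧ (y ∉ W → y ∉ A) := by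
    intro y
    by_cases hyW : y ∈ W
    · exact ⟨univ, isClopen_univ, Or.inl (isLowerSet_univ), mem_univ x,
        fun h => absurd hyW h⟩
    · have hxy : x ≠ y := by rintro rfl; exact hyW hx
      by_cases h : x ≤ y
      · have h' : ¬ y ≤ x := fun h2 => hxy (le_antisymm h h2)
        obtain ⟨A, hA, hAu, hyA, hxA⟩ := exists_isClopen_upper_of_not_le h'
        exact ⟨Aᶜ, hA.compl, Or.inl hAu.compl, hxA, fun _ h2 => h2 hyA⟩
      · obtain ⟨A, hA, hAu, hxA, hyA⟩ := exists_isClopen_upper_of_not_le h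
        exact ⟨A, hA, Or.inr hAu, hxA, fun _ => hyA⟩
  choose A hAc hAlu hxA hyA using key
  have hcomp : IsCompact Wᶜ := hW.isClosed_compl.isCompact
  have hcov : Wᶜ ⊆ ⋃ y : X, (A y)ᶜ := by
    intro z hz
    exact mem_iUnion.2 ⟨z, hyA z hz⟩
  obtain ⟨t, ht⟩ := hcomp.elim_finite_subcover (fun y => (A y)ᶜ)
    (fun y => (hAc y).compl.isOpen) hcov
  refine ⟨⋂ y ∈ t.filter (fun y => IsLowerSet (A y)), A y,
          ⋂ y ∈ t.filter (fun y => ¬ IsLowerSet (A y)), A y,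
          isClopen_biInter_finset (fun y _ => hAc y),
          isLowerSet_iInter₂ ?_,
          isClopen_biInter_finset (fun y _ => hAc y),
          ?_, ?_, ?_, ?_⟩
  · intro y hy
    exact (Finset.mem_filter.1 hy).2
  · refine isUpperSet_iInter₂ ?_
    intro y hy
    rcases hAlu y with h | h
    · exact absurd h (Finset.mem_filter.1 hy).2
    · exact h
  · exact mem_iInter₂.2 fun y _ => hxA y
  · exact mem_iInter₂.2 fun y _ => hxA y
  · rintro z ⟨hzD, hzS⟩
    by_contra hzW
    obtain ⟨y, hyt, hzA⟩ := mem_iUnion₂.1 (ht hzW)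
    by_cases hyl : IsLowerSet (A y)
    · exact hzA (mem_iInter₂.1 hzD y (Finset.mem_filter.2 ⟨hyt, hyl⟩))
    · exact hzA (mem_iInter₂.1 hzS y (Finset.mem_filter.2 ⟨hyt, hyl⟩))

/-- A Priestley space `X` is affine complete (the lattice `E(X)` of clopen
down-sets contains no proper Boolean interval) if and only if each nonempty
open subset of `X` contains two distinct comparable points. -/
theorem priestley_affine_complete_iff_open
    (X : Type*) [TopologicalSpace X] [PartialOrder X]
    [CompactSpace X] [PriestleySpace X] :
    (¬ ∃ U V : Set X, IsClopenLower U ∧ IsClopenLower V ∧ U ⊆ V ∧ U ≠ V ∧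
        ∀ C : Set X, IsClopenLower C → U ⊆ C → C ⊆ V →
          ∃ C' : Set X, IsClopenLower C' ∧ U ⊆ C' ∧ C' ⊆ V ∧
            C ∩ C' = U ∧ C ∪ C' = V) ↔
    (∀ W : Set X, IsOpen W → W.Nonempty → ∃ x ∈ W, ∃ y ∈ W, x < y) := by
  constructor
  · -- no proper Boolean interval → every nonempty open has a comparable pair
    intro hnb W hWopen hWne
    by_contra hno
    push_neg at hno
    apply hnb
    obtain ⟨x, hx⟩ := hWne
    obtain ⟨D, S, hDc, hDl, hSc, hSu, hxD, hxS, hDSW⟩ := exists_clopen_sandwich hWopen hx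
    set U : Set X := D ∩ Sᶜ with hUdef
    have hUcl : IsClopenLower U := ⟨hDc.inter hSc.compl, hDl.inter hSu.compl⟩
    refine ⟨U, D, hUcl, ⟨hDc, hDl⟩, inter_subset_left, ?_, ?_⟩
    · intro hEq
      have : x ∈ U := hEq ▸ hxD
      exact this.2 hxS
    · intro C ⟨hCc, hCl⟩ hUC hCD
      refine ⟨(D \ C) ∪ U, ⟨(hDc.inter hCc.compl).union hUcl.1, ?_⟩,
        subset_union_right, union_subset (diff_subset) inter_subset_left, ?_, ?_⟩
      · -- lower set
        rintro u z hzu (⟨huD, huC⟩ | huU)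
        · have hzD : z ∈ D := hDl hzu huD
          by_cases hzC : z ∈ C
          · by_cases hzU : z ∈ U
            · exact Or.inr hzU
            · -- z ∈ D ∩ S ⊆ W and u ∈ D ∩ S ⊆ W, z ≤ u forces z = u
              have hzS : z ∈ S := by
                by_contra h; exact hzU ⟨hzD, h⟩
              have huS : u ∈ S := by
                by_contra h; exact huC (hUC ⟨huD, h⟩)
              have hzW : z ∈ W := hDSW ⟨hzD, hzS⟩
              have huW : u ∈ W := hDSW ⟨huD, huS⟩
              have : z = u := by
                rcases eq_or_lt_of_le hzu with h | h
                · exact h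
                · exact absurd h (hno z hzW u huW)
              exact absurd (this ▸ hzC) huC
          · exact Or.inl ⟨hzD, hzC⟩
        · exact Or.inr (hUcl.2 hzu huU)
      · -- C ∩ ((D \ C) ∪ U) = U
        ext z
        simp only [mem_inter_iff, mem_union, mem_diff]
        constructor
        · rintro ⟨hzC, ⟨_, hnC⟩ | hzU⟩
          · exact absurd hzC hnC
          · exact hzU
        · intro hzU
          exact ⟨hUC hzU, Or.inr hzU⟩
      · -- C ∪ ((D \ C) ∪ U) = D
        ext z
        simp only [mem_union, mem_diff]
        constructor
        · rintro (hzC | ⟨hzD, _⟩ | hzU)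
          · exact hCD hzC
          · exact hzD
          · exact hzU.1
        · intro hzD
          by_cases hzC : z ∈ C
          · exact Or.inl hzC
          · exact Or.inr (Or.inl ⟨hzD, hzC⟩)
  · -- comparable pairs in opens → no proper Boolean interval
    intro hop
    rintro ⟨U, V, ⟨hUc, hUl⟩, ⟨hVc, hVl⟩, hUV, hne, hcomp⟩
    have hne' : (V \ U).Nonempty := by
      rw [diff_nonempty]
      intro h
      exact hne (subset_antisymm hUV h)
    have hopen : IsOpen (V \ U) := hVc.isOpen.sdiff hUc.isClosed
    obtain ⟨a, haVU, b, hbVU, hab⟩ := hop (V \ U) hopen hne'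
    have hba : ¬ b ≤ a := fun h => absurd (le_antisymm hab.le h) hab.ne
    obtain ⟨S, hSc, hSu, hbS, haS⟩ := exists_isClopen_upper_of_not_le hba
    have hC : IsClopenLower ((Sᶜ ∩ V) ∪ U) :=
      ⟨(hSc.compl.inter hVc).union hUc, (hSu.compl.inter hVl).union hUl⟩
    obtain ⟨C', ⟨hC'c, hC'l⟩, hUC', hC'V, hint, hun⟩ :=
      hcomp _ hC subset_union_right
        (union_subset (inter_subset_right) hUV)
    have hbC : b ∉ (Sᶜ ∩ V) ∪ U := by
      rintro (⟨h1, _⟩ | h2)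
      · exact h1 hbS
      · exact hbVU.2 h2
    have hbC' : b ∈ C' := by
      have hb : b ∈ ((Sᶜ ∩ V) ∪ U) ∪ C' := by rw [hun]; exact hbVU.1
      rcases hb with h | h
      · exact absurd h hbC
      · exact h
    have haC' : a ∈ C' := hC'l hab.le hbC'
    have haC : a ∈ (Sᶜ ∩ V) ∪ U := Or.inl ⟨haS, haVU.1⟩
    have haU : a ∈ U := by rw [← hint]; exact ⟨haC, haC'⟩
    exact haVU.2 haU
end

section
/- A Priestley space X is affine complete if and only if each nonempty clopen subset of X contains two distinct comparable points. Precisely: the lattice E(X) of clopen down-sets of X contains no proper Boolean interval if and only if every nonempty clopen set W ⊆ X contains points x, y with x < y. -/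
open Set

section Aux

variable {X : Type*} [TopologicalSpace X] [Preorder X] [PriestleySpace X]

lemma aux_upper_cover {K : Set X} (hK : IsCompact K) {z : X} (hz : ∀ w ∈ K, ¬ w ≤ z) :
    ∃ S : Set X, IsClopen S ∧ IsUpperSet S ∧ K ⊆ S ∧ z ∉ S := by
  choose U hUc hUu hmem hz' using fun w : K => exists_isClopen_upper_of_not_le (hz w w.2)
  obtain ⟨t, ht⟩ := hK.elim_finite_subcover U (fun w => (hUc w).isOpen)
    (fun x hx => mem_iUnion.2 ⟨⟨x, hx⟩, hmem ⟨x, hx⟩⟩)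
  refine ⟨⋃ w ∈ t, U w, isClopen_biUnion_finset fun w _ => hUc w,
    isUpperSet_iUnion₂ fun w _ => hUu w, ht, ?_⟩
  simp only [mem_iUnion]
  rintro ⟨w, -, hw⟩
  exact hz' w hw

lemma aux_lower_cover {K : Set X} (hK : IsCompact K) {z : X} (hz : ∀ w ∈ K, ¬ z ≤ w) :
    ∃ S : Set X, IsClopen S ∧ IsLowerSet S ∧ K ⊆ S ∧ z ∉ S := by
  choose U hUc hUu hz' hmem using fun w : K => exists_isClopen_lower_of_not_le (hz w w.2)
  obtain ⟨t, ht⟩ := hK.elim_finite_subcover U (fun w => (hUc w).isOpen)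
    (fun x hx => mem_iUnion.2 ⟨⟨x, hx⟩, hmem ⟨x, hx⟩⟩)
  refine ⟨⋃ w ∈ t, U w, isClopen_biUnion_finset fun w _ => hUc w,
    isLowerSet_iUnion₂ fun w _ => hUu w, ht, ?_⟩
  simp only [mem_iUnion]
  rintro ⟨w, -, hw⟩
  exact hz' w hw

lemma aux_isClosed_upperClosure {K : Set X} (hK : IsCompact K) :
    IsClosed {x : X | ∃ w ∈ K, w ≤ x} := by
  rw [← isOpen_compl_iff, isOpen_iff_forall_mem_open]
  intro z hz
  simp only [mem_compl_iff, mem_setOf_eq, not_exists, not_and] at hz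
  obtain ⟨S, hSc, hSu, hKS, hzS⟩ := aux_upper_cover hK hz
  exact ⟨Sᶜ, fun x hx ⟨w, hw, hwx⟩ => hx (hSu hwx (hKS hw)), hSc.compl.isOpen, hzS⟩

lemma aux_isClosed_lowerClosure {K : Set X} (hK : IsCompact K) :
    IsClosed {x : X | ∃ w ∈ K, x ≤ w} := by
  rw [← isOpen_compl_iff, isOpen_iff_forall_mem_open]
  intro z hz
  simp only [mem_compl_iff, mem_setOf_eq, not_exists, not_and] at hz
  obtain ⟨S, hSc, hSl, hKS, hzS⟩ := aux_lower_cover hK hz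
  exact ⟨Sᶜ, fun x hx ⟨w, hw, hwx⟩ => hx (hSl hwx (hKS hw)), hSc.compl.isOpen, hzS⟩

/-- Separation of a compact lower set from a disjoint compact set by a clopen lower set. -/
lemma aux_separation {A B : Set X} (hA : IsCompact A) (hAl : IsLowerSet A)
    (hB : IsCompact B) (hd : Disjoint A B) :
    ∃ V : Set X, IsClopen V ∧ IsLowerSet V ∧ A ⊆ V ∧ Disjoint V B := by
  have key : ∀ a : A, ∃ D : Set X, IsClopen D ∧ IsLowerSet D ∧ (a : X) ∈ D ∧ Disjoint D B := by
    rintro ⟨a, ha⟩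
    have hz : ∀ b ∈ B, ¬ b ≤ a := fun b hb hba =>
      hd.ne_of_mem (hAl hba ha) hb rfl
    obtain ⟨S, hSc, hSu, hBS, haS⟩ := aux_upper_cover hB hz
    exact ⟨Sᶜ, hSc.compl, hSu.compl, haS, disjoint_compl_left.mono_right hBS⟩
  choose D hDc hDl hmem hDd using key
  obtain ⟨t, ht⟩ := hA.elim_finite_subcover D (fun a => (hDc a).isOpen)
    (fun x hx => mem_iUnion.2 ⟨⟨x, hx⟩, hmem ⟨x, hx⟩⟩)
  refine ⟨⋃ a ∈ t, D a, isClopen_biUnion_finset fun a _ => hDc a,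
    isLowerSet_iUnion₂ fun a _ => hDl a, ht, ?_⟩
  rw [disjoint_iUnion₂_left]
  exact fun a _ => hDd a

end Aux

/-- A Priestley space `X` is affine complete (the lattice `E(X)` of clopen
down-sets contains no proper Boolean interval) if and only if each nonempty clopen
subset of `X` contains two distinct comparable points. -/
theorem priestley_affine_complete_iff_clopen
    (X : Type*) [TopologicalSpace X] [PartialOrder X]
    [CompactSpace X] [PriestleySpace X] :
    (¬ ∃ U V : Set X, IsClopenLower U ∧ IsClopenLower V ∧ U ⊆ V ∧ U ≠ V ∧
        ∀ C : Set X, IsClopenLower C → U ⊆ C → C ⊆ V →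
          ∃ C' : Set X, IsClopenLower C' ∧ U ⊆ C' ∧ C' ⊆ V ∧
            C ∩ C' = U ∧ C ∪ C' = V) ↔
    (∀ W : Set X, IsClopen W → W.Nonempty → ∃ x ∈ W, ∃ y ∈ W, x < y) := by
  constructor
  · -- affine complete → every nonempty clopen has x < y
    intro h W hWc hWne
    by_contra hno
    push_neg at hno
    -- W is an antichain
    have anti : ∀ x ∈ W, ∀ y ∈ W, x ≤ y → x = y := by
      intro x hx y hy hxy
      by_contra hne
      exact absurd (lt_of_le_of_ne hxy hne) (by simpa using hno x hx y hy)
    apply h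
    have hWcomp : IsCompact W := hWc.isClosed.isCompact
    -- A = lower closure of W, B = (upper closure of W) \ W
    set A : Set X := {x : X | ∃ w ∈ W, x ≤ w} with hA
    set B : Set X := {x : X | ∃ w ∈ W, w ≤ x} \ W with hB
    have hAl : IsLowerSet A := fun a b hba ⟨w, hw, haw⟩ => ⟨w, hw, hba.trans haw⟩
    have hAcl : IsClosed A := aux_isClosed_lowerClosure hWcomp
    have hBcl : IsClosed B :=
      (aux_isClosed_upperClosure hWcomp).inter (isClosed_compl_iff.2 hWc.isOpen)
    have hd : Disjoint A B := by
      rw [Set.disjoint_left]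
      rintro z ⟨w, hw, hzw⟩ ⟨⟨w', hw', hw'z⟩, hzW⟩
      have hww : w' = w := anti w' hw' w hw (hw'z.trans hzw)
      rw [hww] at hw'z
      have hzeq : z = w := le_antisymm hzw hw'z
      exact hzW (hzeq ▸ hw)
    obtain ⟨V, hVc, hVl, hAV, hVB⟩ :=
      aux_separation hAcl.isCompact hAl hBcl.isCompact hd
    have hWV : W ⊆ V := fun w hw => hAV ⟨w, hw, le_refl w⟩
    have hVB' : ∀ z ∈ V, (∃ w ∈ W, w ≤ z) → z ∈ W := by
      intro z hzV hz
      by_contra hzW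
      exact hVB.ne_of_mem hzV ⟨hz, hzW⟩ rfl
    have hUlow : IsLowerSet (V \ W) := by
      intro a b hba ha
      exact ⟨hVl hba ha.1, fun hbW => ha.2 (hVB' a ha.1 ⟨b, hbW, hba⟩)⟩
    have hne' : V \ W ≠ V := by
      obtain ⟨w, hw⟩ := hWne
      intro hEq
      have hwV : w ∈ V := hWV hw
      rw [← hEq] at hwV
      exact hwV.2 hw
    refine ⟨V \ W, V, ⟨hVc.inter hWc.compl, hUlow⟩, ⟨hVc, hVl⟩, Set.diff_subset, hne', ?_⟩
    intro C hCcl hUC hCV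
    obtain ⟨hCc, hCl⟩ := hCcl
    have hC'low : IsLowerSet (V \ (W ∩ C)) := by
      intro a b hba ha
      refine ⟨hVl hba ha.1, fun hb => ha.2 ?_⟩
      have haW : a ∈ W := hVB' a ha.1 ⟨b, hb.1, hba⟩
      have hEq : b = a := anti b hb.1 a haW hba
      exact ⟨haW, hEq ▸ hb.2⟩
    refine ⟨V \ (W ∩ C), ⟨hVc.inter (hWc.inter hCc).compl, hC'low⟩,
      fun z hz => ⟨hz.1, fun h => hz.2 h.1⟩, Set.diff_subset, ?_, ?_⟩
    · ext z
      constructor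
      · rintro ⟨hzC, hzV, hzWC⟩
        exact ⟨hzV, fun hzW => hzWC ⟨hzW, hzC⟩⟩
      · rintro ⟨hzV, hzW⟩
        exact ⟨hUC ⟨hzV, hzW⟩, hzV, fun h => hzW h.1⟩
    · ext z
      constructor
      · rintro (hz | hz)
        exacts [hCV hz, hz.1]
      · intro hzV
        by_cases hz : z ∈ W ∩ C
        · exact Or.inl hz.2
        · exact Or.inr ⟨hzV, hz⟩
  · -- converse
    rintro h ⟨U, V, ⟨hUc, hUl⟩, ⟨hVc, hVl⟩, hUV, hne, hcomp⟩
    have hWc : IsClopen (V \ U) := hVc.inter hUc.compl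
    have hWne : (V \ U).Nonempty := by
      rw [Set.diff_nonempty]
      exact fun hVU => hne (le_antisymm hUV hVU)
    obtain ⟨x, hx, y, hy, hxy⟩ := h (V \ U) hWc hWne
    obtain ⟨T, hTc, hTu, hyT, hxT⟩ := exists_isClopen_upper_of_not_le hxy.not_ge
    set C : Set X := (V \ T) ∪ U with hC
    have hCcl : IsClopenLower C := by
      refine ⟨(hVc.inter hTc.compl).union hUc, ?_⟩
      rintro a b hba (⟨hbV, hbT⟩ | hbU)
      · exact Or.inl ⟨hVl hba hbV, fun haT => hbT (hTu hba haT)⟩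
      · exact Or.inr (hUl hba hbU)
    obtain ⟨C', ⟨hC'c, hC'l⟩, hUC', hC'V, hCC', hCuC'⟩ :=
      hcomp C hCcl (fun z hz => Or.inr hz) (by
        rintro z (⟨hzV, _⟩ | hzU)
        exacts [hzV, hUV hzU])
    have hxC : x ∈ C := Or.inl ⟨hx.1, hxT⟩
    have hyC : y ∉ C := by
      rintro (⟨_, hyT'⟩ | hyU)
      exacts [hyT' hyT, hy.2 hyU]
    have hyC' : y ∈ C' := by
      have : y ∈ C ∪ C' := hCuC' ▸ hy.1
      exact this.resolve_left hyC
    have hxC' : x ∈ C' := hC'l hxy.le hyC'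
    have : x ∈ U := hCC' ▸ (⟨hxC, hxC'⟩ : x ∈ C ∩ C')
    exact hx.2 this
end

section
/- If (L_i)_{i ∈ I} is a family of bounded distributive lattices each of which contains no proper Boolean interval (i.e. each L_i is affine complete), then the product lattice Π_{i ∈ I} L_i, with componentwise order, contains no proper Boolean interval (i.e. is affine complete). -/
/-- A lattice contains no proper Boolean interval if for all `a < b` there is
some `c ∈ [a,b]` having no complement in `[a,b]`, equivalently: there are no
`a < b` such that every `c ∈ [a,b]` has a complement in `[a,b]`. -/
def NoProperBooleanInterval (L : Type*) [Lattice L] : Prop :=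
  ¬ ∃ a b : L, a < b ∧ ∀ c : L, a ≤ c → c ≤ b →
      ∃ c' : L, a ≤ c' ∧ c' ≤ b ∧ c ⊓ c' = a ∧ c ⊔ c' = b

/-- If `(L i)_{i ∈ I}` is a family of bounded distributive lattices each of
which contains no proper Boolean interval (i.e. each `L i` is affine complete),
then the product lattice `Π i, L i` with componentwise order contains no
proper Boolean interval (i.e. is affine complete). -/
theorem pi_no_proper_boolean_interval
    {I : Type*} (L : I → Type*)
    [∀ i, DistribLattice (L i)] [∀ i, BoundedOrder (L i)]
    (h : ∀ i, NoProperBooleanInterval (L i)) :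
    NoProperBooleanInterval (∀ i, L i) := by
  classical
  rintro ⟨a, b, hab, H⟩
  obtain ⟨i, hi⟩ : ∃ i, a i < b i := by
    by_contra h'
    push_neg at h'
    exact hab.ne (funext fun i =>
      ((hab.le i).lt_or_eq.resolve_left (h' i)))
  refine h i ⟨a i, b i, hi, fun c hc1 hc2 => ?_⟩
  obtain ⟨c', h1, h2, h3, h4⟩ := H (Function.update a i c)
    (fun j => by
      rcases eq_or_ne j i with rfl | hj
      · simpa using hc1
      · simp [Function.update_of_ne hj])
    (fun j => by
      rcases eq_or_ne j i with rfl | hj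
      · simpa using hc2
      · simpa [Function.update_of_ne hj] using hab.le j)
  refine ⟨c' i, h1 i, h2 i, ?_, ?_⟩
  · have := congrFun h3 i
    simpa using this
  · have := congrFun h4 i
    simpa using this
end

section
/- Let L be a bounded affine complete distributive lattice, i.e. a bounded distributive lattice containing no proper Boolean interval. Then every maximal chain C of L is dense: for all x, y ∈ C with x < y there exists z ∈ C with x < z < y. -/
/-- In a bounded affine complete distributive lattice (a bounded distributive
lattice containing no proper Boolean interval), every maximal chain is dense:
for all `x < y` in the chain there is `z` in the chain with `x < z < y`. -/
theorem maximal_chain_dense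
    (L : Type*) [DistribLattice L] [BoundedOrder L]
    (hL : NoProperBooleanInterval L)
    (C : Set L) (hC : IsMaxChain (· ≤ ·) C) :
    ∀ x ∈ C, ∀ y ∈ C, x < y → ∃ z ∈ C, x < z ∧ z < y := by
  intro x hx y hy hxy
  by_contra h
  push_neg at h
  -- every element of C is ≤ x or ≥ y
  have hsplit : ∀ d ∈ C, d ≤ x ∨ y ≤ d := by
    intro d hd
    rcases hC.1.total hd hx with hdx | hxd
    · exact Or.inl hdx
    rcases hC.1.total hd hy with hdy | hyd
    · -- x ≤ d ≤ y, d ∈ C, so by adjacency d = x or contradiction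
      rcases lt_or_eq_of_le hxd with hlt | heq
      · rcases lt_or_eq_of_le hdy with hlt2 | heq2
        · exact absurd hlt2 (h d hd hlt)
        · exact Or.inr heq2.ge
      · exact Or.inl heq.ge
    · exact Or.inr hyd
  apply hL
  refine ⟨x, y, hxy, fun c hxc hcy => ?_⟩
  -- c is comparable to everything in C, so insert c C is a chain
  have hchain : IsChain (· ≤ ·) (insert c C) := by
    apply hC.1.insert
    intro d hd _
    rcases hsplit d hd with h1 | h1
    · exact Or.inr (h1.trans hxc)
    · exact Or.inl (hcy.trans h1)
  have hcC : c ∈ C := by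
    have := hC.2 hchain (Set.subset_insert _ _)
    rw [this]; exact Set.mem_insert _ _
  rcases hsplit c hcC with h1 | h1
  · -- c = x, complement y
    have : c = x := le_antisymm h1 hxc
    exact ⟨y, hxy.le, le_rfl, by simp [this, hxy.le], by simp [this, hxy.le]⟩
  · -- c = y, complement x
    have : c = y := le_antisymm hcy h1
    exact ⟨x, le_rfl, hxy.le, by simp [this, hxy.le], by simp [this, hxy.le]⟩
end

section
/- If L is a bounded affine complete distributive lattice with ⊥ ≠ ⊤, i.e. a nontrivial bounded distributive lattice containing no proper Boolean interval, then there exists a (0,1)-embedding φ : ℚ ∩ [0,1] → L, that is, an injective lattice homomorphism from ℚ ∩ [0,1] into L with φ(0) = ⊥ and φ(1) = ⊤. (Thus ℚ ∩ [0,1] is an initial object among affine complete lattices.) -/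
/-- If `L` is a nontrivial bounded affine complete distributive lattice (a
bounded distributive lattice with `⊥ ≠ ⊤` containing no proper Boolean
interval), then there is a `(0,1)`-embedding of `ℚ ∩ [0,1]` into `L`: an
injective lattice homomorphism `φ` with `φ 0 = ⊥` and `φ 1 = ⊤`. -/
theorem ratUnitInterval_initial
    (L : Type*) [DistribLattice L] [BoundedOrder L]
    (hnt : (⊥ : L) ≠ ⊤) (hL : NoProperBooleanInterval L) :
    ∃ φ : LatticeHom (Set.Icc (0 : ℚ) 1) L,
      Function.Injective φ ∧ φ 0 = ⊥ ∧ φ 1 = ⊤ := by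
  classical
  -- Step 1: density of L
  have hdense : ∀ a b : L, a < b → ∃ c, a < c ∧ c < b := by
    intro a b hab
    by_contra h
    push_neg at h
    refine hL ⟨a, b, hab, fun c hac hcb => ?_⟩
    rcases eq_or_lt_of_le hac with rfl | hac'
    · exact ⟨b, hab.le, le_rfl, inf_eq_left.2 hab.le, sup_eq_right.2 hab.le⟩
    · have hcb' : c = b := by
        by_contra hne
        exact h c hac' (lt_of_le_of_ne hcb hne)
      subst hcb'
      exact ⟨a, le_rfl, hab.le, inf_eq_right.2 hac, sup_eq_left.2 hac⟩
  -- Step 2: a maximal chain (flag) in L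
  obtain ⟨M, hM, -⟩ := (IsChain.empty : IsChain ((· ≤ ·) : L → L → Prop) ∅).exists_maxChain
  set s : Flag L := Flag.ofIsMaxChain M hM with hs
  -- Step 3: the flag is densely ordered
  haveI hds : DenselyOrdered s := by
    constructor
    rintro ⟨a, ha⟩ ⟨b, hb⟩ hab
    have hab' : a < b := hab
    by_cases hx : ∃ x ∈ (s : Set L), a < x ∧ x < b
    · obtain ⟨x, hxs, h1, h2⟩ := hx
      exact ⟨⟨x, hxs⟩, h1, h2⟩
    · push_neg at hx
      obtain ⟨c, hac, hcb⟩ := hdense a b hab'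
      have hcs : c ∈ s := by
        rw [Flag.mem_iff_forall_le_or_ge]
        intro x hxs
        rcases s.le_or_le hxs ha with hxa | hax
        · exact Or.inr (hxa.trans hac.le)
        rcases s.le_or_le hxs hb with hxb | hbx
        · rcases eq_or_lt_of_le hax with rfl | hax'
          · exact Or.inr hac.le
          · rcases eq_or_lt_of_le hxb with rfl | hxb'
            · exact Or.inl hcb.le
            · exact absurd hxb' (hx x hxs hax')
        · exact Or.inl (hcb.le.trans hbx)
      exact ⟨⟨c, hcs⟩, hac, hcb⟩
  -- Step 4: the open interval of the flag is nonempty (indeed nontrivial)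
  have hbts : (⊥ : s) < ⊤ := by
    have h : ((⊥ : s) : L) < ((⊤ : s) : L) := lt_top_iff_ne_top.2 hnt
    exact Subtype.coe_lt_coe.1 h
  obtain ⟨c, hc1, hc2⟩ := exists_between hbts
  obtain ⟨d, hd1, hd2⟩ := exists_between hc2
  haveI : Nontrivial (Set.Ioo (⊥ : s) ⊤) :=
    ⟨⟨⟨c, hc1, hc2⟩, ⟨d, hc1.trans hd1, hd2⟩, by
      simp only [ne_eq, Subtype.mk.injEq]
      exact fun h => hd1.ne (congrArg Subtype.val h)⟩⟩
  -- Step 5: embed the open rational interval into the open flag interval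
  obtain ⟨g⟩ :
      Nonempty (Set.Ioo (0 : ℚ) 1 ↪o Set.Ioo (⊥ : s) ⊤) :=
    Order.embedding_from_countable_to_dense _ _
  -- Step 6: define the map
  set f : Set.Icc (0 : ℚ) 1 → L := fun x =>
    if h : (x : ℚ) ∈ Set.Ioo (0 : ℚ) 1 then ((g ⟨(x : ℚ), h⟩ : s) : L)
    else if (x : ℚ) = 0 then ⊥ else ⊤ with hf
  have hint : ∀ (x : Set.Icc (0 : ℚ) 1) (h : (x : ℚ) ∈ Set.Ioo (0 : ℚ) 1),
      f x = ((g ⟨(x : ℚ), h⟩ : s) : L) := by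
    intro x h
    simp only [hf, dif_pos h]
  have hlow : ∀ (x : Set.Icc (0 : ℚ) 1) (h : (x : ℚ) ∈ Set.Ioo (0 : ℚ) 1),
      ⊥ < f x ∧ f x < ⊤ := by
    intro x h
    rw [hint x h]
    obtain ⟨h1, h2⟩ := (g ⟨(x : ℚ), h⟩).2
    constructor
    · exact h1
    · exact h2
  have hzero : f 0 = ⊥ := by
    simp [hf]
  have hone : f 1 = ⊤ := by
    have : ((1 : Set.Icc (0 : ℚ) 1) : ℚ) ∉ Set.Ioo (0 : ℚ) 1 := by
      simp [Set.Icc.coe_one]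
    simp only [hf, dif_neg this, Set.Icc.coe_one, if_neg one_ne_zero]
  -- trichotomy on elements of Icc
  have htri : ∀ x : Set.Icc (0 : ℚ) 1,
      (x : ℚ) = 0 ∨ (x : ℚ) ∈ Set.Ioo (0 : ℚ) 1 ∨ (x : ℚ) = 1 := by
    rintro ⟨x, hx0, hx1⟩
    rcases eq_or_lt_of_le hx0 with h | h
    · exact Or.inl h.symm
    rcases eq_or_lt_of_le hx1 with h' | h'
    · exact Or.inr (Or.inr h')
    · exact Or.inr (Or.inl ⟨h, h'⟩)
  -- Step 7: strict monotonicity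
  have hmono : StrictMono f := by
    intro x y hxy
    have hxy' : (x : ℚ) < (y : ℚ) := hxy
    rcases htri x with hx | hx | hx
    · -- x = 0
      have hx0 : x = 0 := Set.Icc.coe_eq_zero.1 hx
      rw [hx0, hzero]
      rcases htri y with hy | hy | hy
      · rw [hx, hy] at hxy'
        exact absurd hxy' (lt_irrefl _)
      · exact (hlow y hy).1
      · rw [Set.Icc.coe_eq_one.1 hy, hone]
        exact lt_top_iff_ne_top.2 hnt
    · -- x interior
      rcases htri y with hy | hy | hy
      · rw [hy] at hxy'
        exact absurd (hxy'.trans hx.1) (lt_irrefl _)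
      · rw [hint x hx, hint y hy]
        have : g ⟨(x : ℚ), hx⟩ < g ⟨(y : ℚ), hy⟩ := g.strictMono (by exact hxy')
        exact this
      · rw [Set.Icc.coe_eq_one.1 hy, hone]
        exact (hlow x hx).2
    · -- x = 1 : impossible
      rw [hx] at hxy'
      exact absurd hxy' (not_lt.2 y.2.2)
  refine ⟨⟨⟨f, ?_⟩, ?_⟩, hmono.injective, hzero, hone⟩
  · -- map_sup
    intro a b
    rcases le_total a b with h | h
    · rw [sup_eq_right.2 h, sup_eq_right.2 (hmono.monotone h)]
    · rw [sup_eq_left.2 h, sup_eq_left.2 (hmono.monotone h)]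
  · -- map_inf
    intro a b
    rcases le_total a b with h | h
    · rw [inf_eq_left.2 h, inf_eq_left.2 (hmono.monotone h)]
    · rw [inf_eq_right.2 h, inf_eq_right.2 (hmono.monotone h)]
end
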